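/- Let p be a prime, z a generator of C_{p^{n+1}}, and β ∈ 𝔽_p[C_p], embedded in the semidirect product C_{p^{n+1}} ⋉ 𝔽_p[C_p] where z acts by left translation by a generator of C_p. Then the 'twisted sum' β^{z^{p^n − 1}} · ⋯ · β^{z} · β equals p^{n−1} · ∑_{x∈C_p} (∑_{x'∈C_p} β(x')) x, which is 0 in 𝔽_p[C_p] when n ≥ 2. Consequently (zβ)^{p^n} = z^{p^n} in the semidirect product. -/

import Mathlib

/-- Translation by `c` as a (multiplicative) automorphism of the additive group of
`𝔽_p[C_p]` (functions `C_p → 𝔽_p`), written multiplicatively. -/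
def shiftMulAut (p : ℕ) (c : ZMod p) : MulAut (Multiplicative (ZMod p → ZMod p)) where
  toFun f := Multiplicative.ofAdd fun x => Multiplicative.toAdd f (x - c)
  invFun f := Multiplicative.ofAdd fun x => Multiplicative.toAdd f (x + c)
  left_inv f := by
    show Multiplicative.ofAdd (fun x => Multiplicative.toAdd f (x + c - c)) = f
    simp
  right_inv f := by
    show Multiplicative.ofAdd (fun x => Multiplicative.toAdd f (x - c + c)) = f
    simp
  map_mul' f g := rfl

/-- The left-translation action of `C_{p^{n+1}}` on `𝔽_p[C_p]` (through the quotient `C_p`). -/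
def transAction (p n : ℕ) :
    Multiplicative (ZMod (p ^ (n + 1))) →* MulAut (Multiplicative (ZMod p → ZMod p)) where
  toFun z := shiftMulAut p
    (ZMod.castHom (dvd_pow_self p (Nat.succ_ne_zero n)) (ZMod p) (Multiplicative.toAdd z))
  map_one' := by
    ext f
    simp [shiftMulAut]
  map_mul' z w := by
    ext f
    simp [shiftMulAut, sub_sub,
      ZMod.cast_add (dvd_pow_self p (Nat.succ_ne_zero n))]

/-! The generator `z` acts through `C_p`, so the translate `β^{z^j}` depends only on `j mod p`:
the `p^n` terms of the twisted sum form `p^{n-1}` full periods, each summing to the constant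
function `∑ β`. For `n ≥ 2` the multiplicity `p^{n-1}` vanishes in `𝔽_p`, and the power formula
`(β, z)^k = (∏_{j<k} β^{z^j}, z^k)` in the semidirect product gives `(zβ)^{p^n} = z^{p^n}`. -/

open Finset

section PeriodicSum

variable {M : Type*} [AddCommMonoid M]

theorem Function.Periodic.sum_range_mul {f : ℕ → M} {p : ℕ} (hf : Function.Periodic f p)
    (m : ℕ) : ∑ j ∈ range (m * p), f j = m • ∑ j ∈ range p, f j := by
  induction m with
  | zero => simp
  | succ m ih =>
    rw [add_one_mul, sum_range_add, ih, succ_nsmul]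
    congr 1
    refine sum_congr rfl fun j _ => ?_
    rw [add_comm]
    exact hf.nat_mul m j

theorem ZMod.sum_range_natCast (p : ℕ) [NeZero p] (f : ZMod p → M) :
    ∑ i ∈ range p, f i = ∑ c : ZMod p, f c := by
  refine sum_bij' (fun i _ => (i : ZMod p)) (fun c _ => c.val) ?_ ?_ ?_ ?_ ?_ <;>
    simp +contextual [ZMod.val_lt, Nat.mod_eq_of_lt]

theorem ZMod.sum_range_mul_natCast (p : ℕ) [NeZero p] (f : ZMod p → M) (m : ℕ) :
    ∑ j ∈ range (m * p), f j = m • ∑ c : ZMod p, f c := by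
  have hf : Function.Periodic (fun j : ℕ => f j) p := fun j => by simp
  rw [hf.sum_range_mul, ZMod.sum_range_natCast]

theorem ZMod.sum_range_mul_translate (p : ℕ) [NeZero p] (β : ZMod p → M) (m : ℕ) :
    (∑ j ∈ range (m * p), fun x : ZMod p => β (x - j)) = m • fun _ => ∑ x : ZMod p, β x := by
  rw [ZMod.sum_range_mul_natCast p (fun c x => β (x - c))]
  congr 1
  funext x
  rw [Finset.sum_apply]
  exact Fintype.sum_equiv (Equiv.subLeft x) _ _ fun _ => rfl

end PeriodicSum

theorem ZMod.nsmul_eq_zero_of_dvd {p m : ℕ} {M : Type*} [AddCommGroup M] [Module (ZMod p) M]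
    (h : p ∣ m) (v : M) : m • v = 0 := by
  rw [← Nat.cast_smul_eq_nsmul (ZMod p), (ZMod.natCast_eq_zero_iff m p).2 h, zero_smul]

theorem SemidirectProduct.mk_pow {N G : Type*} [CommGroup N] [Group G] {φ : G →* MulAut N}
    (n : N) (g : G) (k : ℕ) :
    (⟨n, g⟩ : N ⋊[φ] G) ^ k = ⟨∏ j ∈ range k, φ (g ^ j) n, g ^ k⟩ := by
  induction k with
  | zero => rw [pow_zero, prod_range_zero, pow_zero]; rfl
  | succ k ih => rw [pow_succ, ih, prod_range_succ, pow_succ]; rfl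

theorem transAction_ofAdd_one_pow (p n j : ℕ) (β : ZMod p → ZMod p) :
    transAction p n (Multiplicative.ofAdd 1 ^ j) (Multiplicative.ofAdd β) =
      Multiplicative.ofAdd fun x => β (x - j) := by
  simp [transAction, shiftMulAut, ← ofAdd_nsmul]

/-- The twisted sum `β^{z^{p^n−1}} ⋯ β^z · β` equals
`p^{n−1} • (constant function ∑_{x'} β(x'))`, which vanishes for `n ≥ 2`; consequently
`(zβ)^{p^n} = z^{p^n}` in the semidirect product `C_{p^{n+1}} ⋉ 𝔽_p[C_p]`. -/
theorem twisted_sum_eq_zero (p n : ℕ) [Fact p.Prime] (hn : 2 ≤ n)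
    (β : ZMod p → ZMod p) :
    (∑ j ∈ Finset.range (p ^ n), fun x : ZMod p => β (x - (j : ZMod p))) =
        p ^ (n - 1) • (fun _ : ZMod p => ∑ x : ZMod p, β x) ∧
    (∑ j ∈ Finset.range (p ^ n), fun x : ZMod p => β (x - (j : ZMod p))) = 0 ∧
    (⟨Multiplicative.ofAdd β, Multiplicative.ofAdd (1 : ZMod (p ^ (n + 1)))⟩ :
        Multiplicative (ZMod p → ZMod p) ⋊[transAction p n]
          Multiplicative (ZMod (p ^ (n + 1)))) ^ (p ^ n) =
      ⟨1, Multiplicative.ofAdd (1 : ZMod (p ^ (n + 1))) ^ (p ^ n)⟩ := by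
  have hsum : (∑ j ∈ range (p ^ n), fun x : ZMod p => β (x - (j : ZMod p))) =
      p ^ (n - 1) • (fun _ : ZMod p => ∑ x : ZMod p, β x) := by
    rw [← ZMod.sum_range_mul_translate, ← pow_succ, Nat.sub_add_cancel (by omega)]
  have hzero : (∑ j ∈ range (p ^ n), fun x : ZMod p => β (x - (j : ZMod p))) = 0 :=
    hsum.trans (ZMod.nsmul_eq_zero_of_dvd (dvd_pow_self p (by omega)) _)
  refine ⟨hsum, hzero, ?_⟩
  rw [SemidirectProduct.mk_pow]
  simp_rw [transAction_ofAdd_one_pow, ← ofAdd_sum, hzero]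
  rfl
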